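/- arXiv:1412.4866 — 2 statements merged into one kernel-verified Lean document; each statement's English description precedes it below -/
import Mathlib

section
/- Let K be a simplicial complex on the vertex set [m] = {1,…,m}. If the Alexander dual K^∨ of K is collapsible, then the geometric realization |K| ⊆ ℝ^m is contractible. -/
open Finset

/-- A simplicial complex: a collection of subsets of the vertex set, closed under
taking subsets and containing the empty set. -/
def IsComplex {V : Type*} (K : Set (Finset V)) : Prop :=
  ∅ ∈ K ∧ ∀ σ ∈ K, ∀ τ ⊆ σ, τ ∈ K

/-- The Alexander dual of `K` with respect to the full vertex set `[m]`. -/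
def alexDual {m : ℕ} (K : Set (Finset (Fin m))) : Set (Finset (Fin m)) :=
  {σ | Finset.univ \ σ ∉ K}

/-- An elementary collapse of `L` removes a pair of faces `{τ, σ}` where `τ ⊊ σ` and `σ`
is the unique face of `L` properly containing `τ`. -/
def ElemCollapse {V : Type*} (L L' : Set (Finset V)) : Prop :=
  ∃ τ σ : Finset V, τ ∈ L ∧ σ ∈ L ∧ τ ⊂ σ ∧ (∀ ρ ∈ L, τ ⊂ ρ → ρ = σ) ∧
    L' = L \ {τ, σ}

/-- `L` is collapsible: some finite sequence of elementary collapses transforms `L`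
into the complex `{∅, {v}}` consisting of a single vertex `v`. -/
def Collapsible {V : Type*} (L : Set (Finset V)) : Prop :=
  ∃ v : V, Relation.ReflTransGen ElemCollapse L ({∅, {v}} : Set (Finset V))

/-- The geometric realization of `L` inside `ℝ^m`: the union over the nonempty faces `σ`
of the convex hull of the standard basis vectors indexed by `σ`. -/
def geomReal {m : ℕ} (L : Set (Finset (Fin m))) : Set (Fin m → ℝ) :=
  ⋃ σ ∈ {σ : Finset (Fin m) | σ ∈ L ∧ σ ≠ ∅},
    convexHull ℝ ((fun i => Pi.single i (1 : ℝ)) '' (σ : Set (Fin m)))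

/-!
Since `K = (K^∨)^∨`, it suffices to show that `|L^∨|` is contractible for every collapsible
lower set `L` not containing `[m]`, by induction along the collapsing sequence. For the final
complex `{∅, {v}}` the dual is a cone with apex `v`, so its realization is star-convex about
`e_v`. Under Alexander duality, removing a free pair `τ ⊂ σ` from `L` adds the pair `σᶜ ⊂ τᶜ` to
`L^∨`, with `σᶜ` a free face of `τᶜ`; pushing the simplex on `τᶜ` away from `σᶜ` retracts the
larger realization onto `|L^∨|`, and a retract of a contractible space is contractible.
-/

section

variable {m : ℕ}

def geomSimplex (σ : Finset (Fin m)) : Set (Fin m → ℝ) :=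
  convexHull ℝ ((fun i => Pi.single i (1 : ℝ)) '' (σ : Set (Fin m)))

theorem mem_geomSimplex_iff {σ : Finset (Fin m)} {y : Fin m → ℝ} :
    y ∈ geomSimplex σ ↔ y ∈ stdSimplex ℝ (Fin m) ∧ ∀ i ∉ σ, y i = 0 := by
  constructor
  · refine fun hy => convexHull_min (t := stdSimplex ℝ _ ∩ {y | ∀ i ∉ σ, y i = 0}) ?_
      ((convex_stdSimplex ℝ _).inter ?_) hy
    · rintro _ ⟨i, hi, rfl⟩
      refine ⟨single_mem_stdSimplex ℝ i, fun j hj => Pi.single_eq_of_ne ?_ _⟩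
      rintro rfl
      exact hj hi
    · intro u hu w hw a b _ _ _ i hi
      simp [hu i hi, hw i hi]
  · rintro ⟨⟨hnonneg, hsum⟩, hsupp⟩
    have hσsum : ∑ i ∈ σ, y i = 1 := by
      rwa [Finset.sum_subset σ.subset_univ fun i _ hi => hsupp i hi]
    have hy : ∑ i ∈ σ, y i • Pi.single i (1 : ℝ) = y := by
      ext j
      by_cases hj : j ∈ σ <;> simp [Finset.sum_apply, Pi.single_apply, hj, hsupp]
    rw [← hy]
    exact (convex_convexHull ℝ _).sum_mem (fun i _ => hnonneg i) hσsum
      fun i hi => subset_convexHull ℝ _ ⟨i, hi, rfl⟩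

theorem single_mem_geomSimplex {σ : Finset (Fin m)} {v : Fin m} (hv : v ∈ σ) :
    Pi.single v 1 ∈ geomSimplex σ :=
  subset_convexHull ℝ _ ⟨v, hv, rfl⟩

theorem geomSimplex_mono {σ τ : Finset (Fin m)} (h : σ ⊆ τ) : geomSimplex σ ⊆ geomSimplex τ :=
  convexHull_mono (Set.image_mono (Finset.coe_subset.mpr h))

theorem mem_geomReal_iff {L : Set (Finset (Fin m))} {y : Fin m → ℝ} :
    y ∈ geomReal L ↔ ∃ σ ∈ L, y ∈ geomSimplex σ := by
  simp only [geomReal, Set.mem_iUnion, Set.mem_ofPred_eq, exists_prop, geomSimplex]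
  constructor
  · rintro ⟨σ, ⟨hσ, -⟩, hy⟩
    exact ⟨σ, hσ, hy⟩
  · rintro ⟨σ, hσ, hy⟩
    refine ⟨σ, ⟨hσ, ?_⟩, hy⟩
    rintro rfl
    simp at hy

theorem geomReal_mono {L L' : Set (Finset (Fin m))} (h : L ⊆ L') : geomReal L ⊆ geomReal L' :=
  fun _ hy => mem_geomReal_iff.mpr <| (mem_geomReal_iff.mp hy).imp fun _ hσ => ⟨h hσ.1, hσ.2⟩

theorem ContractibleSpace.of_retraction {E : Type*} [TopologicalSpace E] {s t : Set E}
    (hst : s ⊆ t) {r : E → E} (hr : ContinuousOn r t) (hmaps : Set.MapsTo r t s)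
    (hfix : ∀ y ∈ s, r y = y) [ContractibleSpace t] : ContractibleSpace s := by
  let i : C(s, t) := ⟨Set.inclusion hst, continuous_inclusion hst⟩
  let ρ : C(t, s) := ⟨hmaps.restrict r t s, hr.mapsToRestrict hmaps⟩
  have hid : ContinuousMap.id s = ρ.comp ((ContinuousMap.id t).comp i) := by
    ext y : 2
    exact (hfix y y.2).symm
  rw [contractible_iff_id_nullhomotopic, hid]
  exact ((id_nullhomotopic t).comp_left i).comp_right ρ

/-- Moves the weight `t = max 0 (min_{b ∈ B} y b)` off every vertex of `B` and puts `B.card * t`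
on `x`: on a simplex containing `B ∪ {x}` it lands in the faces opposite the vertices of `B`,
and it fixes every point with a vanishing `B`-coordinate. -/
noncomputable def pushOff (B : Finset (Fin m)) (hB : B.Nonempty) (x : Fin m) (y : Fin m → ℝ) :
    Fin m → ℝ :=
  fun i => y i + max 0 (B.inf' hB y) *
    ((if i = x then (B.card : ℝ) else 0) - if i ∈ B then 1 else 0)

section pushOff

variable {B : Finset (Fin m)} (hB : B.Nonempty) (x : Fin m)

theorem continuous_pushOff : Continuous (pushOff B hB x) := by
  have : Continuous fun y : Fin m → ℝ => B.inf' hB y :=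
    Continuous.finset_inf'_apply hB fun b _ => continuous_apply b
  unfold pushOff
  fun_prop

theorem pushOff_eq_self {y : Fin m → ℝ} {b : Fin m} (hb : b ∈ B)
    (hyb : y b = 0) : pushOff B hB x y = y := by
  have : max 0 (B.inf' hB y) = 0 := max_eq_left (hyb ▸ B.inf'_le y hb)
  ext i
  simp [pushOff, this]

theorem exists_pushOff_mem_geomSimplex_erase {A : Finset (Fin m)} (hBA : B ⊆ A)
    (hxA : x ∈ A) (hxB : x ∉ B) {y : Fin m → ℝ} (hy : y ∈ geomSimplex A) :
    ∃ b ∈ B, pushOff B hB x y ∈ geomSimplex (A.erase b) := by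
  obtain ⟨⟨hnonneg, hsum⟩, hsupp⟩ := mem_geomSimplex_iff.mp hy
  obtain ⟨b, hbB, hmin⟩ := B.exists_mem_eq_inf' hB y
  have ht : max 0 (B.inf' hB y) = y b := by rw [hmin]; exact max_eq_right (hnonneg b)
  have hbx : b ≠ x := by rintro rfl; exact hxB hbB
  refine ⟨b, hbB, mem_geomSimplex_iff.mpr ⟨⟨fun i => ?_, ?_⟩, fun i hi => ?_⟩⟩
  · simp only [pushOff, ht]
    by_cases hiB : i ∈ B
    · have : y b ≤ y i := hmin ▸ B.inf'_le y hiB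
      have hix : i ≠ x := by rintro rfl; exact hxB hiB
      simp only [hiB, hix, if_true, if_false]
      linarith
    · have := hnonneg b
      have := hnonneg i
      simp only [hiB, if_false, sub_zero]
      split_ifs <;> positivity
  · simp [pushOff, ht, Finset.sum_add_distrib, ← Finset.mul_sum, hsum]
  · rw [Finset.mem_erase, not_and_or, not_ne_iff] at hi
    simp only [pushOff, ht]
    rcases hi with rfl | hiA
    · simp [hbB, hbx]
    · have hiB : i ∉ B := fun h => hiA (hBA h)
      have hix : i ≠ x := by rintro rfl; exact hiA hxA
      simp [hiB, hix, hsupp i hiA]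

end pushOff

theorem ContractibleSpace.geomReal_of_free_face {Δ Δ' : Set (Finset (Fin m))}
    {A B : Finset (Fin m)} {x : Fin m} (hB : B.Nonempty) (hBA : B ⊆ A) (hxA : x ∈ A)
    (hxB : x ∉ B) (hΔΔ' : Δ ⊆ Δ') (hΔ' : ∀ ρ ∈ Δ', ρ ∈ Δ ∨ ρ ⊆ A)
    (hfree : ∀ ρ ∈ Δ, ¬ B ⊆ ρ) (hfacets : ∀ b ∈ B, A.erase b ∈ Δ)
    [ContractibleSpace (geomReal Δ')] : ContractibleSpace (geomReal Δ) := by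
  have hfix : ∀ y ∈ geomReal Δ, pushOff B hB x y = y := by
    intro y hy
    obtain ⟨ρ, hρ, hyρ⟩ := mem_geomReal_iff.mp hy
    obtain ⟨b, hbB, hbρ⟩ := Finset.not_subset.mp (hfree ρ hρ)
    exact pushOff_eq_self hB x hbB ((mem_geomSimplex_iff.mp hyρ).2 b hbρ)
  refine ContractibleSpace.of_retraction (t := geomReal Δ') (geomReal_mono hΔΔ')
    (continuous_pushOff hB x).continuousOn (fun y hy => ?_) hfix
  obtain ⟨ρ, hρ, hyρ⟩ := mem_geomReal_iff.mp hy
  rcases hΔ' ρ hρ with hρΔ | hρA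
  · rw [hfix y (mem_geomReal_iff.mpr ⟨ρ, hρΔ, hyρ⟩)]
    exact mem_geomReal_iff.mpr ⟨ρ, hρΔ, hyρ⟩
  · obtain ⟨b, hbB, hmem⟩ :=
      exists_pushOff_mem_geomSimplex_erase hB x hBA hxA hxB (geomSimplex_mono hρA hyρ)
    exact mem_geomReal_iff.mpr ⟨A.erase b, hfacets b hbB, hmem⟩

theorem starConvex_geomReal {L : Set (Finset (Fin m))} {v : Fin m}
    (hL : ∀ σ ∈ L, insert v σ ∈ L) : StarConvex ℝ (Pi.single v 1) (geomReal L) := by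
  intro y hy a b ha hb hab
  obtain ⟨σ, hσ, hyσ⟩ := mem_geomReal_iff.mp hy
  refine mem_geomReal_iff.mpr ⟨insert v σ, hL σ hσ, ?_⟩
  exact convex_convexHull ℝ _ (single_mem_geomSimplex (Finset.mem_insert_self v σ))
    (geomSimplex_mono (Finset.subset_insert v σ) hyσ) ha hb hab

theorem mem_alexDual {K : Set (Finset (Fin m))} {σ : Finset (Fin m)} :
    σ ∈ alexDual K ↔ σᶜ ∉ K := by
  rw [Finset.compl_eq_univ_sdiff]
  rfl

theorem alexDual_alexDual (K : Set (Finset (Fin m))) : alexDual (alexDual K) = K := by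
  ext σ
  simp [mem_alexDual]

theorem alexDual_anti {L L' : Set (Finset (Fin m))} (h : L ⊆ L') : alexDual L' ⊆ alexDual L :=
  fun _ hσ hσL => mem_alexDual.mp hσ (h hσL)

theorem IsLowerSet.alexDual {K : Set (Finset (Fin m))} (hK : IsLowerSet K) :
    IsLowerSet (alexDual K) := fun _ _ hτσ hσ =>
  mem_alexDual.mpr fun hτ => mem_alexDual.mp hσ (hK (Finset.compl_subset_compl.mpr hτσ) hτ)

theorem univ_notMem_alexDual {K : Set (Finset (Fin m))} (hK : ∅ ∈ K) :
    (Finset.univ : Finset (Fin m)) ∉ alexDual K := by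
  simpa [mem_alexDual] using hK

theorem ContractibleSpace.geomReal_alexDual_vertex {v : Fin m}
    (hu : (Finset.univ : Finset (Fin m)) ∉ ({∅, {v}} : Set (Finset (Fin m)))) :
    ContractibleSpace (geomReal (alexDual ({∅, {v}} : Set (Finset (Fin m))))) := by
  have hcone : ∀ σ ∈ alexDual ({∅, {v}} : Set (Finset (Fin m))),
      insert v σ ∈ alexDual ({∅, {v}} : Set (Finset (Fin m))) := by
    intro σ hσ
    rw [mem_alexDual, Finset.compl_insert]
    rintro (h | h)
    · exact mem_alexDual.mp hσ ((Finset.erase_eq_empty_iff _ _).mp h)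
    · exact Finset.notMem_erase v σᶜ (h ▸ Finset.mem_singleton_self v)
  have hv : Pi.single v 1 ∈ geomReal (alexDual ({∅, {v}} : Set (Finset (Fin m)))) :=
    mem_geomReal_iff.mpr ⟨{v}, hcone ∅ (by simpa [mem_alexDual] using hu),
      single_mem_geomSimplex (Finset.mem_singleton_self v)⟩
  exact (starConvex_geomReal hcone).contractibleSpace ⟨_, hv⟩

namespace ElemCollapse

variable {L L' : Set (Finset (Fin m))}

theorem subset (h : ElemCollapse L L') : L' ⊆ L := by
  obtain ⟨τ, σ, -, -, -, -, rfl⟩ := h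
  exact Set.sdiff_subset

theorem isLowerSet (h : ElemCollapse L L') (hL : IsLowerSet L) : IsLowerSet L' := by
  obtain ⟨τ, σ, -, -, hτσ, hfree, rfl⟩ := h
  rintro ρ ρ' hρ'ρ ⟨hρ, hρτσ⟩
  refine ⟨hL hρ'ρ hρ, ?_⟩
  rintro (rfl | rfl)
  · exact hρτσ (Or.inr (hfree ρ hρ (hρ'ρ.lt_of_ne fun h => hρτσ (Or.inl h.symm))))
  · exact hρτσ (Or.inr (hfree ρ hρ (hτσ.trans_le hρ'ρ)))

theorem contractibleSpace_geomReal_alexDual (h : ElemCollapse L L') (hL : IsLowerSet L)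
    (hu : (Finset.univ : Finset (Fin m)) ∉ L) [ContractibleSpace (geomReal (alexDual L'))] :
    ContractibleSpace (geomReal (alexDual L)) := by
  obtain ⟨τ, σ, -, hσ, hτσ, hfree, rfl⟩ := h
  obtain ⟨x, hxσ, hxτ⟩ := Finset.exists_of_ssubset hτσ
  have hσc : σᶜ.Nonempty := by
    rw [← Finset.compl_ne_univ_iff_nonempty, compl_compl]
    rintro rfl
    exact hu hσ
  have hnew : ∀ ρ ∈ alexDual (L \ {τ, σ}), ρ ∈ alexDual L ∨ ρ ⊆ τᶜ := by
    intro ρ hρ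
    rw [mem_alexDual, Finset.subset_compl_comm, or_iff_not_imp_left, not_not]
    intro hρL
    have : ρᶜ = τ ∨ ρᶜ = σ := by_contra fun h => mem_alexDual.mp hρ ⟨hρL, h⟩
    rcases this with h | h <;> rw [h]
    exact hτσ.subset
  have hfree' : ∀ ρ ∈ alexDual L, ¬ σᶜ ⊆ ρ := fun ρ hρ hσρ =>
    mem_alexDual.mp hρ (hL (compl_le_iff_compl_le.mp hσρ) hσ)
  have hfacets : ∀ b ∈ σᶜ, τᶜ.erase b ∈ alexDual L := by
    intro b hb
    have hbσ : b ∉ σ := Finset.mem_compl.mp hb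
    rw [mem_alexDual, Finset.compl_erase, compl_compl]
    intro hτb
    have := hfree _ hτb (Finset.ssubset_insert fun h => hbσ (hτσ.subset h))
    exact hbσ (this ▸ Finset.mem_insert_self b τ)
  exact ContractibleSpace.geomReal_of_free_face hσc (Finset.compl_subset_compl.mpr hτσ.subset)
    (Finset.mem_compl.mpr hxτ) (fun h => Finset.mem_compl.mp h hxσ)
    (alexDual_anti Set.sdiff_subset) hnew hfree' hfacets

end ElemCollapse

theorem Collapsible.contractibleSpace_geomReal_alexDual {L : Set (Finset (Fin m))}
    (h : Collapsible L) (hL : IsLowerSet L) (hu : (Finset.univ : Finset (Fin m)) ∉ L) :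
    ContractibleSpace (geomReal (alexDual L)) := by
  obtain ⟨v, h⟩ := h
  induction h using Relation.ReflTransGen.head_induction_on with
  | refl => exact ContractibleSpace.geomReal_alexDual_vertex hu
  | head hcollapse _ ih =>
    have := ih (hcollapse.isLowerSet hL) (fun h => hu (hcollapse.subset h))
    exact hcollapse.contractibleSpace_geomReal_alexDual hL hu

end

/-- If the Alexander dual of `K` is collapsible, then the geometric realization `|K|`
is contractible. -/
theorem contractible_of_dual_collapsible {m : ℕ} (K : Set (Finset (Fin m)))
    (hK : IsComplex K) (hcoll : Collapsible (alexDual K)) :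
    ContractibleSpace ↥(geomReal K) := by
  rw [← alexDual_alexDual K]
  have hKlower : IsLowerSet K := fun _ _ hτσ hσ => hK.2 _ hσ _ hτσ
  exact hcoll.contractibleSpace_geomReal_alexDual hKlower.alexDual (univ_notMem_alexDual hK.1)
end

section
/- Let K be a simplicial complex on the vertex set [m] = {1,…,m} and let v ∈ [m]. If the Alexander dual K^∨ of K (taken over [m]) is shellable, then the Alexander dual of the deletion dl_K(v) := {σ ∈ K : v ∉ σ}, taken over [m] ∖ {v}, is shellable (where the void complex, having no facets, counts as shellable). -/
open Finset

/-- `F` is a facet (maximal face) of `K`. -/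
def IsFacet {V : Type*} (K : Set (Finset V)) (F : Finset V) : Prop :=
  F ∈ K ∧ ∀ G ∈ K, F ⊆ G → F = G

/-- `L` is a shelling of `K`: a duplicate-free enumeration of all facets of `K` such that
for each `k ≥ 2` (here `k ≥ 1` in 0-indexed form), the collection
`{σ ⊆ F_k : σ ⊆ F_j for some j < k}` is nonempty and each of its maximal elements has
cardinality `|F_k| - 1`. -/
def IsShelling {V : Type*} (K : Set (Finset V)) (L : List (Finset V)) : Prop :=
  L.Nodup ∧ (∀ F, F ∈ L ↔ IsFacet K F) ∧
    ∀ k : Fin L.length, 1 ≤ (k : ℕ) →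
      (∃ σ : Finset V, σ ⊆ L.get k ∧ ∃ j : Fin L.length, (j : ℕ) < (k : ℕ) ∧ σ ⊆ L.get j) ∧
      ∀ σ : Finset V,
        (σ ⊆ L.get k ∧ ∃ j : Fin L.length, (j : ℕ) < (k : ℕ) ∧ σ ⊆ L.get j) →
        (∀ ρ : Finset V,
          (ρ ⊆ L.get k ∧ ∃ j : Fin L.length, (j : ℕ) < (k : ℕ) ∧ ρ ⊆ L.get j) →
            σ ⊆ ρ → σ = ρ) →
        σ.card + 1 = (L.get k).card

/-- A (possibly void) simplicial complex is shellable if it admits a shelling. -/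
def Shellable {V : Type*} (K : Set (Finset V)) : Prop :=
  ∃ L, IsShelling K L

/-- The Alexander dual of a complex `L` with respect to a finite vertex set `S`:
`L^∨ = {σ ⊆ S : S ∖ σ ∉ L}`. -/
def dualOver {V : Type*} [DecidableEq V] (S : Finset V) (L : Set (Finset V)) :
    Set (Finset V) :=
  {σ | σ ⊆ S ∧ S \ σ ∉ L}

def shellingBoundary {V : Type*} (L : List (Finset V)) (k : Fin L.length) : Set (Finset V) :=
  {σ | σ ⊆ L.get k ∧ ∃ j : Fin L.length, j < k ∧ σ ⊆ L.get j}

lemma shellingBoundary_finite {V : Type*} (L : List (Finset V)) (k : Fin L.length) :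
    (shellingBoundary L k).Finite :=
  (L.get k).powerset.finite_toSet.subset fun _ hσ => mem_powerset.2 hσ.1

lemma isShelling_iff_card_maximal {V : Type*} (K : Set (Finset V)) (L : List (Finset V)) :
    IsShelling K L ↔ L.Nodup ∧ (∀ F, F ∈ L ↔ IsFacet K F) ∧
      ∀ k : Fin L.length, 1 ≤ (k : ℕ) → ∀ σ, Maximal (· ∈ shellingBoundary L k) σ →
        σ.card + 1 = (L.get k).card := by
  refine and_congr_right fun _ => and_congr_right fun _ => forall_congr' fun k => ?_
  refine forall_congr' fun hk => ⟨fun h σ hσ => h.2 σ hσ.1 fun ρ hρ => hσ.eq_of_le hρ, fun h => ?_⟩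
  refine ⟨⟨∅, empty_subset _, ⟨0, by omega⟩, hk, empty_subset _⟩, fun σ hσ hmax => ?_⟩
  exact h σ (maximal_iff.2 ⟨hσ, hmax⟩)

lemma List.exists_strictMono_get_map_filter_finRange {α : Type*} {n : ℕ} (q : Fin n → Prop)
    [DecidablePred q] (g : Fin n → α) :
    ∃ e : Fin (((List.finRange n).filter q).map g).length → Fin n, StrictMono e ∧
      (∀ k, q (e k) ∧ (((List.finRange n).filter q).map g).get k = g (e k)) ∧
      ∀ j, q j → j ∈ Set.range e := by
  set idxs := (List.finRange n).filter q
  have hlen : (idxs.map g).length = idxs.length := List.length_map _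
  refine ⟨fun k => idxs.get (k.cast hlen), ?_, fun k => ⟨?_, by simp⟩, fun j hj => ?_⟩
  · have : idxs.SortedLT :=
      ((List.pairwise_lt_finRange n).sublist List.filter_sublist).sortedLT
    exact this.strictMono_get.comp fun _ _ h => h
  · simpa [idxs] using List.mem_filter.1 (List.get_mem idxs (k.cast hlen))
  · obtain ⟨k, hk⟩ := List.mem_iff_get.1 (show j ∈ idxs by simpa [idxs] using hj)
    exact ⟨k.cast hlen.symm, hk⟩

section Link

variable {V : Type*} [DecidableEq V]

def link (D : Set (Finset V)) (v : V) : Set (Finset V) :=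
  {σ | v ∉ σ ∧ insert v σ ∈ D}

lemma isFacet_link_iff {D : Set (Finset V)} {v : V} {F : Finset V} :
    IsFacet (link D v) F ↔ v ∉ F ∧ IsFacet D (insert v F) := by
  constructor
  · rintro ⟨⟨hvF, hF⟩, hmax⟩
    refine ⟨hvF, hF, fun G hG hFG => ?_⟩
    have hvG : v ∈ G := hFG (mem_insert_self v F)
    have hGlink : G.erase v ∈ link D v := ⟨notMem_erase v G, by rwa [insert_erase hvG]⟩
    rw [hmax _ hGlink (subset_erase.2 ⟨(subset_insert v F).trans hFG, hvF⟩), insert_erase hvG]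
  · rintro ⟨hvF, hF, hmax⟩
    refine ⟨⟨hvF, hF⟩, fun G ⟨hvG, hG⟩ hFG => ?_⟩
    rw [← erase_insert hvF, ← erase_insert hvG, hmax _ hG (insert_subset_insert v hFG)]

lemma dualOver_erase_eq_link {S : Finset V} {v : V} (hv : v ∈ S) (K : Set (Finset V)) :
    dualOver (S.erase v) {σ ∈ K | v ∉ σ} = link (dualOver S K) v := by
  ext σ
  have hsdiff : S.erase v \ σ = S \ insert v σ := by
    ext; simp only [mem_sdiff, mem_erase, mem_insert]; tauto
  have hv_notMem : v ∉ S \ insert v σ := fun h => (mem_sdiff.1 h).2 (mem_insert_self v σ)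
  show σ ⊆ S.erase v ∧ ¬(S.erase v \ σ ∈ K ∧ v ∉ S.erase v \ σ) ↔
    v ∉ σ ∧ insert v σ ⊆ S ∧ S \ insert v σ ∉ K
  rw [hsdiff, subset_erase, insert_subset_iff]
  tauto

def linkList (L : List (Finset V)) (v : V) : List (Finset V) :=
  ((List.finRange L.length).filter (v ∈ L.get ·)).map fun i => (L.get i).erase v

lemma mem_linkList_iff {L : List (Finset V)} {v : V} {F : Finset V} :
    F ∈ linkList L v ↔ v ∉ F ∧ insert v F ∈ L := by
  simp only [linkList, List.mem_map, List.mem_filter, List.mem_finRange, true_and,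
    decide_eq_true_eq]
  constructor
  · rintro ⟨i, hv, rfl⟩
    exact ⟨notMem_erase v _, by rw [insert_erase hv]; exact L.get_mem i⟩
  · rintro ⟨hvF, hF⟩
    obtain ⟨i, hi⟩ := List.mem_iff_get.1 hF
    exact ⟨i, hi ▸ mem_insert_self v F, by rw [hi, erase_insert hvF]⟩

lemma List.Nodup.linkList {L : List (Finset V)} (hL : L.Nodup) (v : V) :
    (linkList L v).Nodup := by
  refine List.Nodup.map_on (fun i hi j hj hij => ?_) ((List.nodup_finRange _).filter _)
  simp only [List.mem_filter, decide_eq_true_eq] at hi hj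
  exact hL.get_inj_iff.1 (erase_injOn' v hi.2 hj.2 hij)

end Link

section LinkShelling

variable {V : Type*} [DecidableEq V] {L L' : List (Finset V)} {v : V}
  {e : Fin L'.length → Fin L.length}

lemma insert_mem_shellingBoundary_iff (he : StrictMono e)
    (hget : ∀ k, v ∈ L.get (e k) ∧ L'.get k = (L.get (e k)).erase v)
    (hrange : ∀ j, v ∈ L.get j → j ∈ Set.range e) {σ : Finset V} (hσ : v ∉ σ)
    (k : Fin L'.length) :
    insert v σ ∈ shellingBoundary L (e k) ↔ σ ∈ shellingBoundary L' k := by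
  simp only [shellingBoundary, Set.mem_ofPred_eq, (hget _).2, subset_erase, insert_subset_iff,
    hσ, (hget k).1, true_and, and_true, not_false_eq_true]
  refine and_congr_right fun _ => ⟨?_, ?_⟩
  · rintro ⟨j, hjk, hvj, hσj⟩
    obtain ⟨j, rfl⟩ := hrange j hvj
    exact ⟨j, he.lt_iff_lt.1 hjk, hσj⟩
  · rintro ⟨j, hjk, hσj⟩
    exact ⟨e j, he hjk, (hget j).1, hσj⟩

lemma card_add_one_eq_of_maximal_shellingBoundary {D : Set (Finset V)} (hL : IsShelling D L)
    (he : StrictMono e) (hget : ∀ k, v ∈ L.get (e k) ∧ L'.get k = (L.get (e k)).erase v)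
    (hrange : ∀ j, v ∈ L.get j → j ∈ Set.range e) {k : Fin L'.length} (hk : 1 ≤ (k : ℕ))
    {σ : Finset V} (hσ : Maximal (· ∈ shellingBoundary L' k) σ) :
    σ.card + 1 = (L'.get k).card := by
  have hvσ : v ∉ σ := (subset_erase.1 ((hget k).2 ▸ hσ.prop.1)).2
  obtain ⟨ρ, hσρ, hρ⟩ := (shellingBoundary_finite L (e k)).exists_le_maximal
    ((insert_mem_shellingBoundary_iff he hget hrange hvσ k).2 hσ.prop)
  have hvρ : v ∈ ρ := hσρ (mem_insert_self v σ)
  have hρ_erase : ρ.erase v ∈ shellingBoundary L' k := by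
    rw [← insert_mem_shellingBoundary_iff he hget hrange (notMem_erase v ρ), insert_erase hvρ]
    exact hρ.prop
  have hσ_eq : σ = ρ.erase v :=
    hσ.eq_of_le hρ_erase (subset_erase.2 ⟨(subset_insert v σ).trans hσρ, hvσ⟩)
  have hek : 1 ≤ (e k : ℕ) :=
    Nat.one_le_of_lt (he (show (⟨0, by omega⟩ : Fin L'.length) < k from Fin.lt_def.2 hk))
  have hρ_card := ((isShelling_iff_card_maximal D L).1 hL).2.2 (e k) hek ρ hρ
  apply Nat.add_right_cancel (m := 1)
  rw [(hget k).2, card_erase_add_one (hget k).1, ← hρ_card, hσ_eq, card_erase_add_one hvρ]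

end LinkShelling

theorem IsShelling.link {V : Type*} [DecidableEq V] {D : Set (Finset V)} {L : List (Finset V)}
    (hL : IsShelling D L) (v : V) : IsShelling (link D v) (linkList L v) := by
  obtain ⟨e, he, hget, hrange⟩ := List.exists_strictMono_get_map_filter_finRange
    (v ∈ L.get ·) fun i => (L.get i).erase v
  refine (isShelling_iff_card_maximal _ _).2 ⟨hL.1.linkList v, fun F => ?_,
    fun k hk σ hσ => card_add_one_eq_of_maximal_shellingBoundary hL he hget hrange hk hσ⟩
  rw [mem_linkList_iff, isFacet_link_iff, hL.2.1]

theorem Shellable.link {V : Type*} [DecidableEq V] {D : Set (Finset V)} (hD : Shellable D)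
    (v : V) : Shellable (link D v) :=
  let ⟨L, hL⟩ := hD
  ⟨linkList L v, hL.link v⟩

theorem dual_deletion_shellable_of_dual_shellable_general {m : ℕ} (K : Set (Finset (Fin m)))
    (v : Fin m)
    (hshell : Shellable (dualOver Finset.univ K)) :
    Shellable (dualOver (Finset.univ.erase v) {σ ∈ K | v ∉ σ}) := by
  rw [dualOver_erase_eq_link (mem_univ v)]
  exact hshell.link v

/-- If the Alexander dual of `K` (taken over `[m]`) is shellable, then the Alexander dual
of the deletion `dl_K(v) = {σ ∈ K : v ∉ σ}`, taken over `[m] ∖ {v}`, is shellable. -/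
theorem dual_deletion_shellable_of_dual_shellable {m : ℕ} (K : Set (Finset (Fin m)))
    (hK : IsComplex K) (v : Fin m)
    (hshell : Shellable (dualOver Finset.univ K)) :
    Shellable (dualOver (Finset.univ.erase v) {σ ∈ K | v ∉ σ}) :=
  dual_deletion_shellable_of_dual_shellable_general K v hshell
end
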